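/- Let $W \in \mathcal{M}_{q,q}(\mathbb{C})$ with $\det(W + iI_q) \neq 0$, and define $\tilde{Z}^t = (W + iI_q)^{-1}[\,W - iI_q,\; 2Z\,] \in \mathcal{M}_{q, q+N}(\mathbb{C})$ (concatenation of blocks), for $Z \in \mathcal{M}_{q,N}(\mathbb{C})$. Then $\tilde{Z}^t\overline{\tilde{Z}^t}^{\,t} = I_q$ holds if and only if $\frac{1}{2i}(W - \overline{W}^t) = Z\overline{Z}^t$. That is, the generalized Cayley transform maps the BSD-model onto (a piece of) the Shilov boundary $S_{q+N, q}$. -/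

import Mathlib

open Matrix

/-!
Multiplying out, `Z̃ᵗ Z̃ᵗᴴ = I` says `(W - i)(W - i)ᴴ + 4 Z Zᴴ = (W + i)(W + i)ᴴ`, and the
difference of the two Hermitian squares is `2i (Wᴴ - W) = 4 · (W - Wᴴ) / (2i)`.
-/

theorem Complex.add_I_mul_star_sub_sub_I_mul_star {R : Type*} [Ring R] [StarRing R]
    [Algebra ℂ R] [StarModule ℂ R] (a : R) :
    (a + I • 1) * star (a + I • 1) - (a - I • 1) * star (a - I • 1) =
      (2 * I) • (star a - a) := by
  simp only [star_add, star_sub, star_smul, star_one, Complex.star_def, Complex.conj_I,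
    add_mul, mul_add, sub_mul, mul_sub, smul_mul_assoc, mul_smul_comm, mul_one, one_mul,
    neg_smul, mul_neg]
  module

namespace Matrix

variable {n m k R : Type*} [Fintype m] [Fintype k]

theorem fromCols_mul_conjTranspose_fromCols [Semiring R] [StarRing R]
    (A : Matrix n m R) (B : Matrix n k R) :
    fromCols A B * (fromCols A B)ᴴ = A * Aᴴ + B * Bᴴ := by
  rw [conjTranspose_fromCols_eq_fromRows_conjTranspose, fromCols_mul_fromRows]

theorem nonsing_inv_mul_mul_conjTranspose_eq_one_iff [Fintype n] [DecidableEq n] [CommRing R]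
    [StarRing R] {A : Matrix n n R} (hA : IsUnit A.det) (M : Matrix n m R) :
    (A⁻¹ * M) * (A⁻¹ * M)ᴴ = 1 ↔ M * Mᴴ = A * Aᴴ := by
  have : Invertible A := A.invertibleOfIsUnitDet hA
  have : Invertible Aᴴ := Aᴴ.invertibleOfIsUnitDet (by rw [det_conjTranspose]; exact hA.star)
  rw [conjTranspose_mul, conjTranspose_nonsing_inv, Matrix.mul_assoc,
    ← Matrix.mul_assoc M, inv_mul_eq_iff_eq_mul_of_invertible, Matrix.mul_one,
    mul_inv_eq_iff_eq_mul_of_invertible]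

end Matrix

/-- The generalized Cayley transform `Z̃ᵗ = (W + iI)⁻¹ [W - iI, 2Z]` lands in the
Shilov boundary `S_{q+N,q}` exactly when `(W, Z)` satisfies the BSD-model equation. -/
theorem stmt18 (q N : ℕ) (W : Matrix (Fin q) (Fin q) ℂ) (Z : Matrix (Fin q) (Fin N) ℂ)
    (hdet : (W + Complex.I • (1 : Matrix (Fin q) (Fin q) ℂ)).det ≠ 0) :
    ((W + Complex.I • 1)⁻¹ * Matrix.fromCols (W - Complex.I • 1) (2 • Z)) *
        ((W + Complex.I • 1)⁻¹ * Matrix.fromCols (W - Complex.I • 1) (2 • Z))ᴴ = 1 ↔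
      (1 / (2 * Complex.I)) • (W - Wᴴ) = Z * Zᴴ := by
  have hZ : (2 • Z : Matrix (Fin q) (Fin N) ℂ) * (2 • Z)ᴴ = (4 : ℂ) • (Z * Zᴴ) := by
    rw [conjTranspose_nsmul, Matrix.smul_mul, Matrix.mul_smul, smul_smul,
      ← Nat.cast_smul_eq_nsmul ℂ]
    norm_num
  have hI : -(2 * Complex.I) = 4 * (1 / (2 * Complex.I)) := by
    field_simp
    linear_combination -4 * Complex.I_sq
  have hW : (2 * Complex.I) • (Wᴴ - W) = (4 : ℂ) • ((1 / (2 * Complex.I)) • (W - Wᴴ)) := by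
    rw [smul_smul, ← neg_sub W, smul_neg, ← neg_smul, hI]
  rw [nonsing_inv_mul_mul_conjTranspose_eq_one_iff (isUnit_iff_ne_zero.mpr hdet),
    fromCols_mul_conjTranspose_fromCols, ← eq_sub_iff_add_eq',
    ← star_eq_conjTranspose, ← star_eq_conjTranspose,
    Complex.add_I_mul_star_sub_sub_I_mul_star, star_eq_conjTranspose, hZ, hW,
    smul_right_inj (by norm_num), eq_comm]
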